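/- If F = (X; f₁,…,f_N) is a point-fibred IFS on a compact Hausdorff space X, then F possesses a unique attractor A ∈ K(X); namely, the unique fixed point A of the map B ↦ ⋃_i f_i(B) on K(X) satisfies: there exists an open set U ⊆ X with A ⊆ U such that F^k(B) → A in the Vietoris topology on K(X) for every B ∈ K(U), and no other element of K(X) has these properties. -/

import Mathlib

/-!
Let `π : I^ℕ → X` be the coding map, `Π(σ) = {π σ}`. The sets `f_{σ|k}(X)` are compact and
decrease to `π σ`, so for an open `W ∋ π σ` some `f_{σ|k}(X)` lies in `W`; since this only
depends on the first `k` letters of `σ`, `π` is continuous and, by compactness of `I^ℕ`, a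
single `k` works for all `σ` once `W ⊇ π(I^ℕ)`. As `F^k(B) = ⋃_{|w| = k} f_w(B)`, this gives
`F^k(B) → A := π(I^ℕ)` for every nonempty `B`, and `A` is compact with `F(A) = A` by
`π σ = f_{σ₀}(π(shift σ))`. A second fixed point `A' ∈ K(X)` is its own orbit, so the
constant sequence `A'` converges to `A`, which forces `A' = A`.
-/

open Set Topology Filter

/-- `seqComp f σ k` is the composition `f_{σ|k} = f_{σ₁} ∘ f_{σ₂} ∘ ⋯ ∘ f_{σ_k}`
(with the sequence `σ` indexed from `0`). -/
def seqComp {X : Type*} {N : ℕ} (f : Fin N → X → X) (σ : ℕ → Fin N) : ℕ → X → X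
  | 0 => id
  | k + 1 => seqComp f σ k ∘ f (σ k)

/-- `PiMap f σ = ⋂_{k ≥ 1} f_{σ₁} ∘ ⋯ ∘ f_{σ_k}(X)`. -/
def PiMap {X : Type*} {N : ℕ} (f : Fin N → X → X) (σ : ℕ → Fin N) : Set X :=
  ⋂ k : ℕ, seqComp f σ (k + 1) '' Set.univ

/-- The Vietoris topology (on all subsets of `X`; the Vietoris topology on the
nonempty compact subsets `K(X)` is the subspace topology it induces): it is generated
by the sets `{B | B ⊆ U}` and `{B | B ∩ U ≠ ∅}` for `U ⊆ X` open. -/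
def vietoris (X : Type*) [TopologicalSpace X] : TopologicalSpace (Set X) :=
  TopologicalSpace.generateFrom
    ({S | ∃ U : Set X, IsOpen U ∧ S = {B : Set X | B ⊆ U}} ∪
     {S | ∃ U : Set X, IsOpen U ∧ S = {B : Set X | (B ∩ U).Nonempty}})

open PiNat

section IFS

variable {X : Type*} {N : ℕ}

def hutchinson (f : Fin N → X → X) (B : Set X) : Set X := ⋃ i, f i '' B

def seqCons (i : Fin N) (σ : ℕ → Fin N) : ℕ → Fin N
  | 0 => i
  | n + 1 => σ n

section seqComp

variable (f : Fin N → X → X)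

theorem seqComp_succ' (σ : ℕ → Fin N) :
    ∀ k, seqComp f σ (k + 1) = f (σ 0) ∘ seqComp f (fun n => σ (n + 1)) k
  | 0 => rfl
  | k + 1 => by
    rw [seqComp, seqComp_succ' σ k]
    rfl

theorem seqComp_seqCons (i : Fin N) (σ : ℕ → Fin N) (k : ℕ) :
    seqComp f (seqCons i σ) (k + 1) = f i ∘ seqComp f σ k :=
  seqComp_succ' f _ k

theorem seqComp_eq_of_mem_cylinder {σ τ : ℕ → Fin N} {k : ℕ} (h : τ ∈ cylinder σ k) :
    seqComp f τ k = seqComp f σ k := by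
  induction k with
  | zero => rfl
  | succ k ih =>
    simp only [seqComp, ih (cylinder_anti σ k.le_succ h), h k k.lt_succ_self]

theorem antitone_seqComp_image_univ (σ : ℕ → Fin N) :
    Antitone fun k => seqComp f σ k '' univ :=
  antitone_nat_of_succ_le fun k => by
    simp only [seqComp, image_comp]
    exact image_mono (subset_univ _)

theorem seqComp_image_subset_iterate_hutchinson (σ : ℕ → Fin N) (k : ℕ) (B : Set X) :
    seqComp f σ k '' B ⊆ (hutchinson f)^[k] B := by
  induction k generalizing B with
  | zero => simp [seqComp]
  | succ k ih =>
    rw [seqComp, image_comp, Function.iterate_succ_apply]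
    exact (image_mono (subset_iUnion (fun i => f i '' B) (σ k))).trans (ih _)

theorem iterate_hutchinson_subset [Nonempty (Fin N)] (k : ℕ) (B : Set X) :
    (hutchinson f)^[k] B ⊆ ⋃ σ, seqComp f σ k '' B := by
  induction k with
  | zero => exact fun b hb => mem_iUnion.2 ⟨fun _ => Classical.arbitrary _, b, hb, rfl⟩
  | succ k ih =>
    rw [Function.iterate_succ_apply']
    rintro _ ⟨_, ⟨i, rfl⟩, x, hx, rfl⟩
    obtain ⟨σ, b, hb, rfl⟩ := mem_iUnion.1 (ih hx)
    exact mem_iUnion.2 ⟨seqCons i σ, b, hb, by rw [seqComp_seqCons]; rfl⟩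

theorem isOpen_setOf_seqComp_image_subset (k : ℕ) (W : Set X) :
    IsOpen {σ : ℕ → Fin N | seqComp f σ k '' univ ⊆ W} :=
  isOpen_iff_forall_mem_open.2 fun σ hσ =>
    ⟨cylinder σ k, fun _ hτ => by rwa [mem_ofPred_eq, seqComp_eq_of_mem_cylinder f hτ],
      isOpen_cylinder _ σ k, self_mem_cylinder σ k⟩

end seqComp

theorem continuous_seqComp [TopologicalSpace X] {f : Fin N → X → X}
    (hf : ∀ i, Continuous (f i)) (σ : ℕ → Fin N) : ∀ k, Continuous (seqComp f σ k)
  | 0 => continuous_id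
  | k + 1 => (continuous_seqComp hf σ k).comp (hf (σ k))

section CodingMap

variable {f : Fin N → X → X} {π : (ℕ → Fin N) → X}

theorem mem_seqComp_image_univ (hπ : ∀ σ, PiMap f σ = {π σ}) (σ : ℕ → Fin N) :
    ∀ k, π σ ∈ seqComp f σ k '' univ
  | 0 => mem_image_of_mem _ trivial
  | k + 1 => mem_iInter.1 ((hπ σ).symm ▸ mem_singleton _ : π σ ∈ PiMap f σ) k

theorem coding_eq_apply_shift (hπ : ∀ σ, PiMap f σ = {π σ}) (σ : ℕ → Fin N) :
    π σ = f (σ 0) (π fun n => σ (n + 1)) := by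
  have h : f (σ 0) (π fun n => σ (n + 1)) ∈ PiMap f σ := mem_iInter.2 fun k => by
    rw [seqComp_succ', image_comp]
    exact mem_image_of_mem _ (mem_seqComp_image_univ hπ _ k)
  rw [hπ σ] at h
  exact h.symm

theorem hutchinson_range_coding (hπ : ∀ σ, PiMap f σ = {π σ}) :
    hutchinson f (range π) = range π := by
  apply subset_antisymm
  · rintro _ ⟨_, ⟨i, rfl⟩, _, ⟨σ, rfl⟩, rfl⟩
    exact ⟨seqCons i σ, coding_eq_apply_shift hπ _⟩
  · rintro _ ⟨σ, rfl⟩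
    rw [coding_eq_apply_shift hπ σ]
    exact mem_iUnion.2 ⟨σ 0, mem_image_of_mem _ (mem_range_self _)⟩

variable [TopologicalSpace X] [CompactSpace X] [T2Space X]

theorem exists_seqComp_image_univ_subset (hf : ∀ i, Continuous (f i))
    (hπ : ∀ σ, PiMap f σ = {π σ}) {σ : ℕ → Fin N} {W : Set X} (hW : IsOpen W)
    (hσW : π σ ∈ W) : ∃ k, seqComp f σ k '' univ ⊆ W := by
  obtain ⟨k, hk⟩ := exists_subset_nhds_of_compactSpace
    (V := fun k => seqComp f σ (k + 1) '' univ)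
    ((antitone_seqComp_image_univ f σ).comp_monotone fun _ _ => Nat.succ_le_succ).directed_ge
    (fun k => (isCompact_univ.image (continuous_seqComp hf σ _)).isClosed)
    (fun x (hx : x ∈ PiMap f σ) => by
      rw [hπ σ, mem_singleton_iff] at hx
      exact hx ▸ hW.mem_nhds hσW)
  exact ⟨k + 1, hk⟩

theorem preimage_coding_eq_iUnion (hf : ∀ i, Continuous (f i))
    (hπ : ∀ σ, PiMap f σ = {π σ}) {W : Set X} (hW : IsOpen W) :
    π ⁻¹' W = ⋃ k, {σ | seqComp f σ k '' univ ⊆ W} := by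
  ext σ
  simp only [mem_preimage, mem_iUnion, mem_ofPred_eq]
  exact ⟨exists_seqComp_image_univ_subset hf hπ hW,
    fun ⟨k, hk⟩ => hk (mem_seqComp_image_univ hπ σ k)⟩

theorem continuous_coding (hf : ∀ i, Continuous (f i)) (hπ : ∀ σ, PiMap f σ = {π σ}) :
    Continuous π :=
  continuous_def.2 fun W hW => by
    rw [preimage_coding_eq_iUnion hf hπ hW]
    exact isOpen_iUnion fun k => isOpen_setOf_seqComp_image_subset f k W

theorem exists_forall_seqComp_image_univ_subset (hf : ∀ i, Continuous (f i))
    (hπ : ∀ σ, PiMap f σ = {π σ}) {W : Set X} (hW : IsOpen W) (hπW : range π ⊆ W) :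
    ∃ k, ∀ σ, seqComp f σ k '' univ ⊆ W := by
  have hcover : univ ⊆ ⋃ k, {σ | seqComp f σ k '' univ ⊆ W} := fun σ _ => by
    rw [← preimage_coding_eq_iUnion hf hπ hW]
    exact hπW (mem_range_self σ)
  obtain ⟨k, hk⟩ := isCompact_univ.elim_directed_cover _
    (fun k => isOpen_setOf_seqComp_image_subset f k W) hcover
    (Monotone.directed_le fun _ _ hmn σ hσ => (antitone_seqComp_image_univ f σ hmn).trans hσ)
  exact ⟨k, fun σ => hk (mem_univ σ)⟩

end CodingMap

section Vietoris

variable [TopologicalSpace X]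

theorem tendsto_vietoris_iff {ι : Type*} {l : Filter ι} {u : ι → Set X} {A : Set X} :
    Tendsto u l (@nhds _ (vietoris X) A) ↔
      (∀ W, IsOpen W → A ⊆ W → ∀ᶠ i in l, u i ⊆ W) ∧
      (∀ W, IsOpen W → (A ∩ W).Nonempty → ∀ᶠ i in l, (u i ∩ W).Nonempty) := by
  rw [vietoris, TopologicalSpace.tendsto_nhds_generateFrom_iff]
  constructor
  · intro h
    exact ⟨fun W hW hA => h _ (Or.inl ⟨W, hW, rfl⟩) hA,
      fun W hW hA => h _ (Or.inr ⟨W, hW, rfl⟩) hA⟩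
  · rintro ⟨h₁, h₂⟩ s (⟨W, hW, rfl⟩ | ⟨W, hW, rfl⟩) hA
    exacts [h₁ W hW hA, h₂ W hW hA]

theorem eq_of_tendsto_vietoris_const [T1Space X] {ι : Type*} {l : Filter ι} [l.NeBot]
    {A B : Set X} (hB : IsClosed B) (h : Tendsto (fun _ => B) l (@nhds _ (vietoris X) A)) :
    B = A := by
  obtain ⟨h₁, h₂⟩ := tendsto_vietoris_iff.1 h
  refine subset_antisymm (fun x hxB => by_contra fun hxA => ?_)
    (fun x hxA => by_contra fun hxB => ?_)
  · obtain ⟨_, hBx⟩ := (h₁ {x}ᶜ isOpen_compl_singleton (subset_compl_singleton_iff.2 hxA)).exists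
    exact hBx hxB rfl
  · obtain ⟨_, y, hyB, hy⟩ := (h₂ Bᶜ hB.isOpen_compl ⟨x, hxA, hxB⟩).exists
    exact hy hyB

end Vietoris

theorem tendsto_iterate_hutchinson [TopologicalSpace X] [CompactSpace X] [T2Space X]
    [Nonempty (Fin N)] {f : Fin N → X → X} {π : (ℕ → Fin N) → X}
    (hf : ∀ i, Continuous (f i)) (hπ : ∀ σ, PiMap f σ = {π σ}) {B : Set X}
    (hB : B.Nonempty) :
    Tendsto (fun k => (hutchinson f)^[k] B) atTop (@nhds _ (vietoris X) (range π)) := by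
  refine tendsto_vietoris_iff.2 ⟨fun W hW hπW => ?_, ?_⟩
  · obtain ⟨K, hK⟩ := exists_forall_seqComp_image_univ_subset hf hπ hW hπW
    filter_upwards [eventually_ge_atTop K] with k hk
    refine (iterate_hutchinson_subset f k B).trans (iUnion_subset fun σ => ?_)
    exact (image_mono (subset_univ B)).trans ((antitone_seqComp_image_univ f σ hk).trans (hK σ))
  · rintro W hW ⟨_, ⟨σ, rfl⟩, hσW⟩
    obtain ⟨K, hK⟩ := exists_seqComp_image_univ_subset hf hπ hW hσW
    obtain ⟨b, hb⟩ := hB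
    filter_upwards [eventually_ge_atTop K] with k hk
    exact ⟨seqComp f σ k b, seqComp_image_subset_iterate_hutchinson f σ k B ⟨b, hb, rfl⟩,
      hK (antitone_seqComp_image_univ f σ hk ⟨b, trivial, rfl⟩)⟩

end IFS

theorem existsUnique_attractor_general
    {X : Type*} [TopologicalSpace X] [CompactSpace X] [T2Space X]
    {N : ℕ} (hN : 0 < N) (f : Fin N → X → X) (hf : ∀ i, Continuous (f i))
    (hpf : ∀ σ : ℕ → Fin N, ∃ x : X, PiMap f σ = {x}) :
    ∃! A : Set X, (A.Nonempty ∧ IsCompact A) ∧ (⋃ i, f i '' A) = A ∧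
      ∃ U : Set X, IsOpen U ∧ A ⊆ U ∧
        ∀ B : Set X, B.Nonempty → IsCompact B → B ⊆ U →
          Filter.Tendsto (fun k => (fun C : Set X => ⋃ i, f i '' C)^[k] B)
            Filter.atTop (@nhds (Set X) (vietoris X) A) := by
  have : Nonempty (Fin N) := ⟨⟨0, hN⟩⟩
  choose π hπ using hpf
  refine ⟨range π, ⟨⟨range_nonempty π, isCompact_range (continuous_coding hf hπ)⟩,
    hutchinson_range_coding hπ, univ, isOpen_univ, subset_univ _,
    fun B hB _ _ => tendsto_iterate_hutchinson hf hπ hB⟩, ?_⟩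
  rintro A ⟨⟨hA, hAc⟩, hAfix, -⟩
  have hconst : ∀ k, (hutchinson f)^[k] A = A := Function.iterate_fixed hAfix
  exact eq_of_tendsto_vietoris_const (l := atTop) hAc.isClosed
    (by simpa only [hconst] using tendsto_iterate_hutchinson hf hπ hA)

/-- A point-fibred IFS on a compact Hausdorff space possesses a unique
attractor `A ∈ K(X)`: a nonempty compact set with `F(A) = A` for which there is an open
`U ⊇ A` such that `F^k(B) → A` in the Vietoris topology for every nonempty compact
`B ⊆ U`; and no other element of `K(X)` has these properties. -/
theorem existsUnique_attractor
    {X : Type*} [TopologicalSpace X] [CompactSpace X] [T2Space X] [Nonempty X]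
    {N : ℕ} (hN : 0 < N) (f : Fin N → X → X) (hf : ∀ i, Continuous (f i))
    (hpf : ∀ σ : ℕ → Fin N, ∃ x : X, PiMap f σ = {x}) :
    ∃! A : Set X, (A.Nonempty ∧ IsCompact A) ∧ (⋃ i, f i '' A) = A ∧
      ∃ U : Set X, IsOpen U ∧ A ⊆ U ∧
        ∀ B : Set X, B.Nonempty → IsCompact B → B ⊆ U →
          Filter.Tendsto (fun k => (fun C : Set X => ⋃ i, f i '' C)^[k] B)
            Filter.atTop (@nhds (Set X) (vietoris X) A) :=
  existsUnique_attractor_general hN f hf hpf
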